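/- For n ≥ 4, the norm on ℝⁿ whose unit ball is the Voronoï region of D_n is given by ‖x‖_P = max_{i≠j} (|x_i| + |x_j|). -/

import Mathlib

/-
The Voronoï cell of `Dₙ` is cut out by the inequalities `2⟨z, m⟩ ≤ ‖m‖²`, `m ∈ Dₙ`. The lattice
vectors `±eᵢ ± eⱼ` give `|zᵢ| + |zⱼ| ≤ 1`, and these already imply all the others: then at most
one coordinate `z_{i₀}` exceeds `1/2`, every other one is at most `1 - |z_{i₀}|`, and since
`∑ |mᵢ|` is even, `|m_{i₀}| = 1` forces another `mᵢ ≠ 0`, which pays for the deficit. So the cell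
is the unit ball of the positively homogeneous function `max_{i ≠ j} (|xᵢ| + |xⱼ|)`, which is then
its gauge.
-/

open Set Filter MeasureTheory Pointwise

/-- The lattice `Dₙ = {x ∈ ℤⁿ : ∑ xᵢ even}`. -/
def Dlat (n : ℕ) : Set (Fin n → ℝ) :=
  {x | (∀ i, ∃ m : ℤ, x i = (m : ℝ)) ∧ ∃ k : ℤ, ∑ i, x i = 2 * (k : ℝ)}

/-- The Voronoï region of `Dₙ`. -/
def VorDn (n : ℕ) : Set (Fin n → ℝ) :=
  {z | ∀ x ∈ Dlat n, ∑ i, (z i) ^ 2 ≤ ∑ i, (z i - x i) ^ 2}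

/-- The norm `‖x‖ = max_{i ≠ j} (|xᵢ| + |xⱼ|)` (whose unit ball is the Voronoï
region of `Dₙ`). -/
noncomputable def DnNorm (n : ℕ) (x : Fin n → ℝ) : ℝ :=
  sSup {r : ℝ | ∃ i j, i ≠ j ∧ r = |x i| + |x j|}

/-- The vertex set of the Voronoï region of `Dₙ`: the `2n` vectors `±eᵢ` and the
`2ⁿ` vectors `(±1/2, …, ±1/2)`. -/
def VPDn (n : ℕ) : Set (Fin n → ℝ) :=
  {v | ∃ i, v = Pi.single i (1 : ℝ) ∨ v = -Pi.single i (1 : ℝ)} ∪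
    {v | ∀ i, v i = 1 / 2 ∨ v i = -(1 / 2)}

theorem sInf_nonneg_smul_sublevel_eq {E : Type*} [AddCommGroup E] [Module ℝ E] (N : E → ℝ)
    (hN : ∀ x, 0 ≤ N x) (hsmul : ∀ (c : ℝ) (x : E), 0 ≤ c → N (c • x) = c * N x) (x : E) :
    sInf {l : ℝ | 0 ≤ l ∧ x ∈ l • {z | N z ≤ 1}} = N x := by
  have mem_of_lt : ∀ l, N x < l → 0 ≤ l ∧ x ∈ l • {z | N z ≤ 1} := by
    intro l hl
    have hl0 : 0 < l := (hN x).trans_lt hl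
    refine ⟨hl0.le, l⁻¹ • x, ?_, smul_inv_smul₀ hl0.ne' x⟩
    rw [mem_ofPred_eq, hsmul _ _ (inv_nonneg.mpr hl0.le), inv_mul_le_iff₀ hl0, mul_one]
    exact hl.le
  refine csInf_eq_of_forall_ge_of_forall_gt_exists_lt ⟨_, mem_of_lt _ (lt_add_one _)⟩ ?_ ?_
  · rintro l ⟨hl0, z, hz, rfl⟩
    rw [hsmul _ _ hl0]
    exact mul_le_of_le_one_right hl0 hz
  · intro w hw
    exact ⟨(N x + w) / 2, mem_of_lt _ (by linarith), by linarith⟩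

theorem even_sum_abs_iff {ι : Type*} (s : Finset ι) (f : ι → ℤ) :
    Even (∑ i ∈ s, |f i|) ↔ Even (∑ i ∈ s, f i) := by
  classical
  induction s using Finset.induction_on with
  | empty => simp
  | insert a s ha ih =>
    rw [Finset.sum_insert ha, Finset.sum_insert ha, Int.even_add, Int.even_add, even_abs, ih]

theorem Int.abs_le_self_sq (m : ℤ) : |m| ≤ m ^ 2 :=
  Int.natCast_natAbs m ▸ Int.natAbs_le_self_sq m

theorem abs_sq_sub_two_mul_abs_le {z c : ℝ} (t : ℝ) (h : |z| ≤ c) :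
    |t| ^ 2 - 2 * c * |t| ≤ t ^ 2 - 2 * z * t := by
  have : z * t ≤ c * |t| :=
    (le_abs_self _).trans ((abs_mul z t).trans_le (mul_le_mul_of_nonneg_right h (abs_nonneg t)))
  nlinarith [sq_abs t]

theorem one_sub_two_mul_abs_le {z c : ℝ} (m : ℤ) (h : |z| ≤ c) :
    (1 - 2 * c) * |(m : ℝ)| ≤ (m : ℝ) ^ 2 - 2 * z * m := by
  have hm : |(m : ℝ)| ≤ |(m : ℝ)| ^ 2 := by exact_mod_cast (sq_abs m).symm ▸ Int.abs_le_self_sq m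
  nlinarith [abs_sq_sub_two_mul_abs_le (m : ℝ) h]

theorem sq_sub_two_mul_add_nonneg_of_even {M T : ℤ} (hT : 0 ≤ T) (hMT : Even (M + T))
    {a : ℝ} (ha : 1 / 2 ≤ a) (ha1 : a ≤ 1) :
    0 ≤ (M : ℝ) ^ 2 - 2 * a * M + (2 * a - 1) * T := by
  have hT' : (0 : ℝ) ≤ T := by exact_mod_cast hT
  rcases le_or_gt M 0 with hM | hM
  · have : (M : ℝ) ≤ 0 := by exact_mod_cast hM
    nlinarith
  rcases eq_or_lt_of_le (Int.add_one_le_of_lt hM) with hM1 | hM2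
  · have hT1 : (1 : ℝ) ≤ T := by
      obtain ⟨c, hc⟩ := hMT
      exact_mod_cast (by omega : 1 ≤ T)
    rw [← hM1]
    push_cast
    nlinarith
  · have : (2 : ℝ) ≤ M := by exact_mod_cast hM2
    nlinarith

theorem mem_Dlat_iff {n : ℕ} {x : Fin n → ℝ} :
    x ∈ Dlat n ↔ ∃ m : Fin n → ℤ, Even (∑ i, m i) ∧ x = fun i => (m i : ℝ) := by
  constructor
  · rintro ⟨hint, k, hk⟩
    choose m hm using hint
    refine ⟨m, ⟨k, ?_⟩, funext hm⟩
    have : ((∑ i, m i : ℤ) : ℝ) = ((k + k : ℤ) : ℝ) := by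
      push_cast
      rw [← two_mul, ← hk]
      exact Finset.sum_congr rfl fun i _ => (hm i).symm
    exact_mod_cast this
  · rintro ⟨m, ⟨k, hk⟩, rfl⟩
    refine ⟨fun i => ⟨m i, rfl⟩, k, ?_⟩
    show ∑ i, (m i : ℝ) = 2 * k
    rw [two_mul]
    exact_mod_cast hk

theorem mem_vorDn_iff_forall_int {n : ℕ} {z : Fin n → ℝ} :
    z ∈ VorDn n ↔
      ∀ m : Fin n → ℤ, Even (∑ i, m i) → 0 ≤ ∑ i, ((m i : ℝ) ^ 2 - 2 * z i * m i) := by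
  simp only [VorDn, mem_ofPred_eq, mem_Dlat_iff]
  constructor
  · intro h m hm
    have := h _ ⟨m, hm, rfl⟩
    rw [← sub_nonneg, ← Finset.sum_sub_distrib] at this
    convert this using 2 with i
    ring
  · rintro h _ ⟨m, hm, rfl⟩
    rw [← sub_nonneg, ← Finset.sum_sub_distrib]
    convert h m hm using 2 with i
    ring

theorem exists_sign_mul_eq_abs (a : ℝ) : ∃ ε : ℤ, (ε = 1 ∨ ε = -1) ∧ ε * a = |a| := by
  rcases abs_cases a with ⟨h, -⟩ | ⟨h, -⟩
  · exact ⟨1, Or.inl rfl, by simp [h]⟩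
  · exact ⟨-1, Or.inr rfl, by simp [h]⟩

theorem abs_add_abs_le_one_of_mem_vorDn {n : ℕ} {z : Fin n → ℝ} (hz : z ∈ VorDn n)
    {i j : Fin n} (hij : i ≠ j) : |z i| + |z j| ≤ 1 := by
  obtain ⟨ε, hε, hεz⟩ := exists_sign_mul_eq_abs (z i)
  obtain ⟨δ, hδ, hδz⟩ := exists_sign_mul_eq_abs (z j)
  have heven : Even (∑ k, (Pi.single i ε + Pi.single j δ : Fin n → ℤ) k) := by
    simp only [Pi.add_apply, Finset.sum_add_distrib, Finset.sum_pi_single', Finset.mem_univ,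
      if_true]
    rcases hε with rfl | rfl <;> rcases hδ with rfl | rfl <;> decide
  have h := mem_vorDn_iff_forall_int.mp hz _ heven
  rw [Finset.sum_eq_add i j hij (fun k _ hk => by simp [hk.1, hk.2]) (by simp) (by simp)] at h
  simp only [Pi.add_apply, Pi.single_eq_same, Pi.single_eq_of_ne hij, Pi.single_eq_of_ne hij.symm,
    add_zero, zero_add] at h
  have hε2 : (ε : ℝ) ^ 2 = 1 := by rcases hε with rfl | rfl <;> norm_num
  have hδ2 : (δ : ℝ) ^ 2 = 1 := by rcases hδ with rfl | rfl <;> norm_num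
  linarith

theorem mem_vorDn_of_abs_add_abs_le_one {n : ℕ} (hn : 2 ≤ n) {z : Fin n → ℝ}
    (h : ∀ i j, i ≠ j → |z i| + |z j| ≤ 1) : z ∈ VorDn n := by
  rw [mem_vorDn_iff_forall_int]
  intro m hm
  by_cases hsmall : ∀ i, |z i| ≤ 1 / 2
  · refine Finset.sum_nonneg fun i _ => ?_
    nlinarith [one_sub_two_mul_abs_le (m i) (hsmall i), abs_nonneg (m i : ℝ)]
  push Not at hsmall
  obtain ⟨i₀, hi₀⟩ := hsmall
  set a := |z i₀|
  have hrest : ∀ i ≠ i₀, |z i| ≤ 1 - a := fun i hi => by linarith [h i i₀ hi]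
  have ha1 : a ≤ 1 := by
    have : Nontrivial (Fin n) := Fin.nontrivial_iff_two_le.mpr hn
    obtain ⟨j, hj⟩ := exists_ne i₀
    linarith [hrest j hj, abs_nonneg (z j)]
  -- parity excludes the only bad case `|m i₀| = 1`, `m i = 0` for `i ≠ i₀`
  have hparity : Even (|m i₀| + ∑ i ∈ Finset.univ.erase i₀, |m i|) := by
    rw [Finset.add_sum_erase _ (fun i => |m i|) (Finset.mem_univ i₀)]
    exact (even_sum_abs_iff _ _).mpr hm
  have hfirst := abs_sq_sub_two_mul_abs_le (m i₀ : ℝ) (le_refl a)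
  have hothers : (2 * a - 1) * ∑ i ∈ Finset.univ.erase i₀, |(m i : ℝ)| ≤
      ∑ i ∈ Finset.univ.erase i₀, ((m i : ℝ) ^ 2 - 2 * z i * m i) := by
    rw [Finset.mul_sum]
    refine Finset.sum_le_sum fun i hi => ?_
    linarith [one_sub_two_mul_abs_le (m i) (hrest i (Finset.ne_of_mem_erase hi))]
  have hbound := sq_sub_two_mul_add_nonneg_of_even
    (Finset.sum_nonneg fun i _ => abs_nonneg (m i)) hparity (by linarith) ha1
  push_cast at hbound
  rw [← Finset.add_sum_erase _ _ (Finset.mem_univ i₀)]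
  linarith

theorem mem_vorDn_iff {n : ℕ} (hn : 2 ≤ n) {z : Fin n → ℝ} :
    z ∈ VorDn n ↔ ∀ i j, i ≠ j → |z i| + |z j| ≤ 1 :=
  ⟨fun hz _ _ => abs_add_abs_le_one_of_mem_vorDn hz, mem_vorDn_of_abs_add_abs_le_one hn⟩

theorem dnNorm_nonneg {n : ℕ} (x : Fin n → ℝ) : 0 ≤ DnNorm n x :=
  Real.sSup_nonneg <| by
    rintro r ⟨i, j, -, rfl⟩
    positivity

theorem dnNorm_smul {n : ℕ} {c : ℝ} (hc : 0 ≤ c) (x : Fin n → ℝ) :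
    DnNorm n (c • x) = c * DnNorm n x := by
  rw [DnNorm, DnNorm, ← smul_eq_mul, ← Real.sSup_smul_of_nonneg hc]
  congr 1
  ext r
  simp only [mem_ofPred_eq, Set.mem_smul_set, Pi.smul_apply, smul_eq_mul, abs_mul, abs_of_nonneg hc]
  constructor
  · rintro ⟨i, j, hij, rfl⟩
    exact ⟨_, ⟨i, j, hij, rfl⟩, by ring⟩
  · rintro ⟨_, ⟨i, j, hij, rfl⟩, rfl⟩
    exact ⟨i, j, hij, by ring⟩

theorem dnNorm_le_iff {n : ℕ} (hn : 2 ≤ n) {x : Fin n → ℝ} {r : ℝ} :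
    DnNorm n x ≤ r ↔ ∀ i j, i ≠ j → |x i| + |x j| ≤ r := by
  have hbdd : BddAbove {r : ℝ | ∃ i j, i ≠ j ∧ r = |x i| + |x j|} :=
    ((Set.finite_range fun p : Fin n × Fin n => |x p.1| + |x p.2|).subset
      (by rintro _ ⟨i, j, -, rfl⟩; exact ⟨(i, j), rfl⟩)).bddAbove
  have : Nontrivial (Fin n) := Fin.nontrivial_iff_two_le.mpr hn
  obtain ⟨i, j, hij⟩ := exists_pair_ne (Fin n)
  rw [DnNorm, csSup_le_iff hbdd ⟨_, i, j, hij, rfl⟩]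
  constructor
  · exact fun h i j hij => h _ ⟨i, j, hij, rfl⟩
  · rintro h _ ⟨i, j, hij, rfl⟩
    exact h i j hij

theorem norm_voronoi_Dn (n : ℕ) (hn : 4 ≤ n) (x : Fin n → ℝ) :
    sInf {l : ℝ | 0 ≤ l ∧ x ∈ l • VorDn n} = DnNorm n x := by
  have hn2 : 2 ≤ n := by omega
  have hVor : VorDn n = {z | DnNorm n z ≤ 1} := by
    ext z
    rw [mem_vorDn_iff hn2, mem_ofPred_eq, dnNorm_le_iff hn2]
  rw [hVor]
  exact sInf_nonneg_smul_sublevel_eq _ dnNorm_nonneg (fun _ _ hc => dnNorm_smul hc _) x
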